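/- (Cyclicity theorem) Let A be an n×n irreducible nonnegative matrix with maximum cycle geometric mean λ(A) = 1. Then the sequence of max-times powers A, A², A³, ... is ultimately periodic: there exist T and γ ≥ 1 such that A^{t+γ} = A^t for all t ≥ T. -/

import Mathlib

open scoped NNReal

/-- Max-times matrix product. -/
noncomputable def maxMul {n : ℕ} (A B : Matrix (Fin n) (Fin n) ℝ≥0) : Matrix (Fin n) (Fin n) ℝ≥0 :=
  fun i j => Finset.univ.sup fun k => A i k * B k j

/-- Max-times matrix power. -/
noncomputable def maxPow {n : ℕ} (A : Matrix (Fin n) (Fin n) ℝ≥0) : ℕ → Matrix (Fin n) (Fin n) ℝ≥0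
  | 0 => fun i j => if i = j then 1 else 0
  | (k+1) => maxMul (maxPow A k) A

/-- Max-times matrix-vector product. -/
noncomputable def maxVec {n : ℕ} (A : Matrix (Fin n) (Fin n) ℝ≥0) (x : Fin n → ℝ≥0) : Fin n → ℝ≥0 :=
  fun i => Finset.univ.sup fun j => A i j * x j

/-- Weight of the cycle visiting `c 0, c 1, ..., c m, c 0` (indices cyclic in `Fin (m+1)`). -/
noncomputable def cycleWeight {n m : ℕ} (A : Matrix (Fin n) (Fin n) ℝ≥0) (c : Fin (m+1) → Fin n) : ℝ≥0 :=
  ∏ i : Fin (m+1), A (c i) (c (i + 1))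

/-- Kleene star `I ⊕ A ⊕ ... ⊕ A^{n-1}`. -/
noncomputable def kleeneStar {n : ℕ} (A : Matrix (Fin n) (Fin n) ℝ≥0) : Matrix (Fin n) (Fin n) ℝ≥0 :=
  fun i j => (Finset.range n).sup fun k => maxPow A k i j

/-- A matrix is irreducible if its digraph is strongly connected. -/
def IrreducibleMat {n : ℕ} (A : Matrix (Fin n) (Fin n) ℝ≥0) : Prop :=
  ∀ i j : Fin n, ∃ t : ℕ, 0 < t ∧ 0 < maxPow A t i j

namespace CycAux

variable {n : ℕ} (A : Matrix (Fin n) (Fin n) ℝ≥0)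

lemma maxMul_assoc (M N P : Matrix (Fin n) (Fin n) ℝ≥0) :
    maxMul (maxMul M N) P = maxMul M (maxMul N P) := by
  funext i j
  show Finset.univ.sup (fun k => (Finset.univ.sup fun l => M i l * N l k) * P k j)
      = Finset.univ.sup fun l => M i l * Finset.univ.sup fun k => N l k * P k j
  simp only [NNReal.finset_sup_mul, NNReal.mul_finset_sup]
  rw [Finset.sup_comm]
  simp [mul_assoc]

lemma maxMul_one (M : Matrix (Fin n) (Fin n) ℝ≥0) : maxMul M (maxPow A 0) = M := by
  funext i j
  show (Finset.univ.sup fun k => M i k * if k = j then 1 else 0) = M i j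
  apply le_antisymm
  · apply Finset.sup_le
    intro k _
    by_cases h : k = j <;> simp [h]
  · have := Finset.le_sup (f := fun k => M i k * if k = j then 1 else 0)
      (Finset.mem_univ j)
    simpa using this

lemma maxPow_add (a b : ℕ) : maxPow A (a + b) = maxMul (maxPow A a) (maxPow A b) := by
  induction b with
  | zero => rw [Nat.add_zero, maxMul_one]
  | succ b ih =>
      show maxPow A ((a+b)+1) = _
      show maxMul (maxPow A (a+b)) A = _
      rw [ih, maxMul_assoc]
      rfl

lemma entry_mul_le (a b : ℕ) (i k j : Fin n) :
    maxPow A a i k * maxPow A b k j ≤ maxPow A (a + b) i j := by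
  rw [maxPow_add]
  exact Finset.le_sup (f := fun k => maxPow A a i k * maxPow A b k j) (Finset.mem_univ k)

/-- walk weight -/
noncomputable def pw (t : ℕ) (f : ℕ → Fin n) : ℝ≥0 :=
  ∏ k ∈ Finset.range t, A (f k) (f (k+1))

lemma pw_split (a b : ℕ) (f : ℕ → Fin n) :
    pw A (a + b) f = pw A a f * pw A b (fun s => f (a + s)) := by
  unfold pw
  rw [Finset.prod_range_add]
  rfl

lemma pw_le_entry (t : ℕ) (f : ℕ → Fin n) : pw A t f ≤ maxPow A t (f 0) (f t) := by
  induction t with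
  | zero => simp [pw, maxPow]
  | succ t ih =>
      have : pw A (t+1) f = pw A t f * A (f t) (f (t+1)) := by
        unfold pw; rw [Finset.prod_range_succ]
      rw [this]
      calc pw A t f * A (f t) (f (t+1))
          ≤ maxPow A t (f 0) (f t) * A (f t) (f (t+1)) := by
            exact mul_le_mul_left ih _
        _ ≤ _ := by
            show _ ≤ maxMul (maxPow A t) A (f 0) (f (t+1))
            exact Finset.le_sup (f := fun k => maxPow A t (f 0) k * A k (f (t+1)))
              (Finset.mem_univ (f t))

lemma entry_eq_pw {t : ℕ} {i j : Fin n} (h : 0 < maxPow A t i j) :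
    ∃ f : ℕ → Fin n, f 0 = i ∧ f t = j ∧ pw A t f = maxPow A t i j := by
  induction t generalizing j with
  | zero =>
      have hij : i = j := by
        by_contra hne
        simp [maxPow, hne] at h
      exact ⟨fun _ => i, rfl, hij ▸ rfl, by simp [pw, maxPow, hij]⟩
  | succ t ih =>
      have hne : (Finset.univ : Finset (Fin n)).Nonempty := ⟨i, Finset.mem_univ i⟩
      obtain ⟨k, -, hk⟩ := Finset.exists_mem_eq_sup Finset.univ hne
        (fun k => maxPow A t i k * A k j)
      have hk' : maxPow A (t+1) i j = maxPow A t i k * A k j := hk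
      have hpos : 0 < maxPow A t i k := by
        rcases Nat.eq_zero_or_pos 0 with _ | _
        · by_contra hz
          push_neg at hz
          have : maxPow A t i k = 0 := le_antisymm hz bot_le
          rw [hk', this, zero_mul] at h
          exact lt_irrefl 0 h
        · by_contra hz
          push_neg at hz
          have : maxPow A t i k = 0 := le_antisymm hz bot_le
          rw [hk', this, zero_mul] at h
          exact lt_irrefl 0 h
      obtain ⟨f, hf0, hft, hfw⟩ := ih hpos
      refine ⟨fun s => if s ≤ t then f s else j, by simpa using hf0, by simp, ?_⟩
      have hsplit : pw A (t+1) (fun s => if s ≤ t then f s else j)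
          = pw A t (fun s => if s ≤ t then f s else j) * A (f t) j := by
        unfold pw
        rw [Finset.prod_range_succ]
        congr 1
        · simp
      rw [hsplit]
      have : pw A t (fun s => if s ≤ t then f s else j) = pw A t f := by
        apply Finset.prod_congr rfl
        intro x hx
        rw [Finset.mem_range] at hx
        have h1 : x ≤ t := le_of_lt hx
        have h2 : x + 1 ≤ t := hx
        simp [h1, h2]
      rw [this, hfw, hk', hft]

/-- products of at most k entries -/
noncomputable def S (k : ℕ) : Finset ℝ≥0 :=
  Finset.image (fun g : Fin k → Option (Fin n × Fin n) =>
    ∏ i, Option.elim (g i) 1 (fun p => A p.1 p.2)) Finset.univ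

lemma one_mem_S (k : ℕ) : (1 : ℝ≥0) ∈ S A k := by
  refine Finset.mem_image.2 ⟨fun _ => none, Finset.mem_univ _, by simp⟩

lemma mul_mem_S {a b : ℕ} {x y : ℝ≥0} (hx : x ∈ S A a) (hy : y ∈ S A b) :
    x * y ∈ S A (a + b) := by
  obtain ⟨g, -, rfl⟩ := Finset.mem_image.1 hx
  obtain ⟨g', -, rfl⟩ := Finset.mem_image.1 hy
  refine Finset.mem_image.2 ⟨Fin.append g g', Finset.mem_univ _, ?_⟩
  rw [Fin.prod_univ_add]
  congr 1
  · exact Finset.prod_congr rfl fun i _ => by rw [Fin.append_left]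
  · exact Finset.prod_congr rfl fun i _ => by rw [Fin.append_right]

lemma S_mono {a b : ℕ} (h : a ≤ b) : S A a ⊆ S A b := by
  intro x hx
  have := mul_mem_S A hx (one_mem_S A (b - a))
  rwa [mul_one, Nat.add_sub_cancel' h] at this

lemma pw_mem_S (t : ℕ) (f : ℕ → Fin n) : pw A t f ∈ S A t := by
  refine Finset.mem_image.2 ⟨fun i => some (f i.val, f (i.val + 1)), Finset.mem_univ _, ?_⟩
  simp only [Option.elim]
  exact Fin.prod_univ_eq_prod_range (fun k => A (f k) (f (k+1))) t

lemma fin_add_one_val {m : ℕ} (i : Fin (m+1)) :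
    ((i + 1 : Fin (m+1))).val = (i.val + 1) % (m+1) := by
  rw [Fin.add_def]
  rcases Nat.eq_zero_or_pos m with hm | hm
  · subst hm; omega
  · have h1 : (1 : Fin (m+1)).val = 1 := by
      simp [Fin.val_one, Nat.mod_eq_of_lt (by omega : 1 < m + 1)]
    rw [h1]

/-- closed walks have weight equal to a `cycleWeight` -/
lemma pw_closed_eq_cycleWeight (m : ℕ) (f : ℕ → Fin n) (hf : f (m+1) = f 0) :
    pw A (m+1) f = cycleWeight A (fun i : Fin (m+1) => f i.val) := by
  unfold cycleWeight pw
  rw [← Fin.prod_univ_eq_prod_range (fun k => A (f k) (f (k+1)))]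
  refine Finset.prod_congr rfl fun i _ => ?_
  show A (f i.val) (f (i.val + 1)) = A (f i.val) (f ((i+1 : Fin (m+1)).val))
  rw [fin_add_one_val]
  rcases Nat.lt_or_ge (i.val + 1) (m+1) with h | h
  · rw [Nat.mod_eq_of_lt h]
  · have hm : i.val = m := by omega
    rw [hm, Nat.mod_self, hf]

/-- conversely, a `cycleWeight` is the weight of a closed walk -/
lemma cycleWeight_eq_pw (m : ℕ) (c : Fin (m+1) → Fin n) :
    cycleWeight A c = pw A (m+1) (fun s => c ⟨s % (m+1), Nat.mod_lt _ (Nat.succ_pos m)⟩) := by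
  unfold cycleWeight pw
  rw [← Fin.prod_univ_eq_prod_range
    (fun k => A (c ⟨k % (m+1), Nat.mod_lt _ (Nat.succ_pos m)⟩)
      (c ⟨(k+1) % (m+1), Nat.mod_lt _ (Nat.succ_pos m)⟩))]
  refine Finset.prod_congr rfl fun i _ => ?_
  congr 1
  · congr 1
    exact (Fin.ext (by simp [Nat.mod_eq_of_lt i.isLt])).symm
  · congr 1
    exact Fin.ext (by rw [fin_add_one_val])

/-- extension of a finite tuple -/
noncomputable def extF (h : Fin (n+1) → Fin n) : ℕ → Fin n :=
  fun s => h ⟨min s n, by omega⟩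

noncomputable def cwf (p : Fin n × (Fin (n+1) → Fin n)) : ℝ≥0 :=
  pw A (p.1.val + 1) (extF p.2)

/-- max subcritical short-cycle weight -/
noncomputable def csub : ℝ≥0 :=
  (Finset.univ.filter (fun p => cwf A p < 1)).sup (cwf A)

lemma csub_lt_one : csub A < 1 := by
  apply Finset.sup_lt_iff (by norm_num : (⊥ : ℝ≥0) < 1) |>.2
  intro p hp
  exact (Finset.mem_filter.1 hp).2

lemma le_csub {L : ℕ} (f : ℕ → Fin n) (h1 : 1 ≤ L) (h2 : L ≤ n) (h3 : pw A L f < 1) :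
    pw A L f ≤ csub A := by
  have hn : 0 < n := by omega
  set p : Fin n × (Fin (n+1) → Fin n) :=
    (⟨L - 1, by omega⟩, fun i => f i.val) with hp
  have hcw : cwf A p = pw A L f := by
    unfold cwf
    have hL : (p.1 : ℕ) + 1 = L := by simp only [hp]; omega
    rw [hL]
    unfold pw
    refine Finset.prod_congr rfl fun k hk => ?_
    rw [Finset.mem_range] at hk
    have e1 : min k n = k := by omega
    have e2 : min (k+1) n = k+1 := by omega
    simp only [extF, hp, e1, e2]
  have hmem : p ∈ Finset.univ.filter (fun q => cwf A q < 1) := by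
    refine Finset.mem_filter.2 ⟨Finset.mem_univ _, by rwa [hcw]⟩
  calc pw A L f = cwf A p := hcw.symm
    _ ≤ csub A := Finset.le_sup hmem

noncomputable def Bb : ℝ≥0 := (S A (n-1)).sup id

/-- main decomposition lemma -/
lemma dec (hn : 1 ≤ n)
    (hcl : ∀ (m : ℕ) (f : ℕ → Fin n), f (m+1) = f 0 → pw A (m+1) f ≤ 1) :
    ∀ t (f : ℕ → Fin n), ∃ r : ℕ,
      pw A t f ≤ Bb A * csub A ^ r ∧ pw A t f ∈ S A ((n-1) + r * n) := by
  intro t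
  induction t using Nat.strong_induction_on with
  | _ t IH =>
  intro f
  rcases Nat.lt_or_ge t n with ht | ht
  · refine ⟨0, ?_, ?_⟩
    · rw [pow_zero, mul_one]
      exact Finset.le_sup (f := id) (S_mono A (by omega) (pw_mem_S A t f))
    · exact S_mono A (by omega) (pw_mem_S A t f)
  · -- find repeat among f 0 .. f n
    obtain ⟨x, y, hxy, hfxy⟩ := Fintype.exists_ne_map_eq_of_card_lt
      (fun s : Fin (n+1) => f s.val) (by simp)
    -- wlog x < y
    obtain ⟨p, q, hpq, hq, hfpq⟩ : ∃ p q : ℕ, p < q ∧ q ≤ n ∧ f p = f q := by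
      rcases Nat.lt_or_ge x.val y.val with h | h
      · exact ⟨x.val, y.val, h, by omega, hfxy⟩
      · have : y.val < x.val := by
          rcases Nat.lt_or_ge y.val x.val with h' | h'
          · exact h'
          · exact absurd (Fin.ext (by omega)) hxy
        exact ⟨y.val, x.val, this, by omega, hfxy.symm⟩
    set L := q - p with hL
    have hL1 : 1 ≤ L := by omega
    have hLn : L ≤ n := by omega
    set f2 : ℕ → Fin n := fun s => f (p + s) with hf2
    have hclosed : f2 L = f2 0 := by
      simp only [hf2]
      rw [(by omega : p + L = q), (by omega : p + 0 = p), hfpq]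
    have hcw1 : pw A L f2 ≤ 1 := by
      have := hcl (L - 1) f2 (by rwa [(by omega : L - 1 + 1 = L)])
      rwa [(by omega : L - 1 + 1 = L)] at this
    -- the shortened walk
    set g : ℕ → Fin n := fun s => if s ≤ p then f s else f (s + L) with hg
    have hgp : ∀ s, g (p + s) = f (q + s) := by
      intro s
      rcases Nat.eq_zero_or_pos s with rfl | hs
      · simp only [hg, le_refl, if_pos, Nat.add_zero]
        simpa using hfpq
      · have : ¬ (p + s ≤ p) := by omega
        simp only [hg, this, if_false]
        congr 1
        omega
    have hsplit1 : pw A t f = pw A p f * pw A (t - p) f2 := by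
      rw [← pw_split]
      congr 1
      omega
    have hsplit2 : pw A (t - p) f2 = pw A L f2 * pw A (t - q) (fun s => f (q + s)) := by
      have h1 : t - p = L + (t - q) := by omega
      have h2 : (fun s => f2 (L + s)) = (fun s => f (q + s)) := by
        funext s
        simp only [hf2]
        congr 1
        omega
      rw [h1, pw_split, h2]
    have hsplit3 : pw A (t - L) g = pw A p f * pw A (t - q) (fun s => f (q + s)) := by
      have h1 : t - L = p + (t - q) := by omega
      have hgf : (fun s => g (p + s)) = (fun s => f (q + s)) := funext hgp
      rw [h1, pw_split, hgf]
      congr 1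
      refine Finset.prod_congr rfl fun k hk => ?_
      rw [Finset.mem_range] at hk
      have e1 : g k = f k := by simp only [hg, if_pos (by omega : k ≤ p)]
      have e2 : g (k+1) = f (k+1) := by simp only [hg, if_pos (by omega : k+1 ≤ p)]
      rw [e1, e2]
    have hmain : pw A t f = pw A (t - L) g * pw A L f2 := by
      rw [hsplit1, hsplit2, hsplit3]
      ring
    obtain ⟨r, hr1, hr2⟩ := IH (t - L) (by omega) g
    rcases eq_or_lt_of_le hcw1 with heq | hlt
    · refine ⟨r, ?_, ?_⟩
      · rw [hmain, heq, mul_one]; exact hr1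
      · rw [hmain, heq, mul_one]; exact hr2
    · have hc : pw A L f2 ≤ csub A := le_csub A f2 hL1 hLn hlt
      refine ⟨r + 1, ?_, ?_⟩
      · rw [hmain, pow_succ, ← mul_assoc]
        exact mul_le_mul' hr1 hc
      · rw [hmain]
        have hm := mul_mem_S A hr2 (S_mono A hLn (pw_mem_S A L f2))
        have : n - 1 + r * n + n = n - 1 + (r + 1) * n := by ring
        rwa [this] at hm

end CycAux


lemma nsg_mul_mem (D : Set ℕ) (hadd : ∀ a ∈ D, ∀ b ∈ D, a + b ∈ D)
    {a : ℕ} (ha : a ∈ D) : ∀ k, 1 ≤ k → k * a ∈ D := by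
  intro k
  induction k with
  | zero => omega
  | succ k ih =>
      intro _
      rcases Nat.eq_zero_or_pos k with rfl | hk
      · simpa using ha
      · have := hadd _ (ih hk) _ ha
        rwa [show k * a + a = (k+1) * a by ring] at this

lemma nsg (D : Set ℕ) (hadd : ∀ a ∈ D, ∀ b ∈ D, a + b ∈ D) (hpos : ∀ a ∈ D, 0 < a)
    (x₀ : ℕ) (hx₀ : x₀ ∈ D) :
    ∃ d M : ℕ, 0 < d ∧ (∀ s ∈ D, d ∣ s) ∧ (∀ m, M ≤ m → d ∣ m → m ∈ D) := by
  classical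
  set Dz : Set ℤ := ((↑) : ℕ → ℤ) '' D with hDz
  obtain ⟨g, hg⟩ := Int.subgroup_cyclic (AddSubgroup.closure Dz)
  -- every element of D is a multiple of g
  have hdvd : ∀ s ∈ D, g ∣ (s : ℤ) := by
    intro s hs
    have hmem : (s : ℤ) ∈ AddSubgroup.closure Dz :=
      AddSubgroup.subset_closure ⟨s, hs, rfl⟩
    rw [hg, AddSubgroup.mem_closure_singleton] at hmem
    obtain ⟨k, hk⟩ := hmem
    exact ⟨k, by rw [← hk, smul_eq_mul]; ring⟩
  have hgne : g ≠ 0 := by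
    intro h0
    have := hdvd x₀ hx₀
    rw [h0] at this
    have : (x₀ : ℤ) = 0 := zero_dvd_iff.1 this
    have := hpos x₀ hx₀
    omega
  -- g is a difference of two elements of D ∪ {0}
  have hgmem : g ∈ AddSubgroup.closure Dz := by
    rw [hg]
    exact AddSubgroup.subset_closure rfl
  have hdiff : ∃ a b : ℕ, (a ∈ D ∨ a = 0) ∧ (b ∈ D ∨ b = 0) ∧ g = (a : ℤ) - b := by
    refine AddSubgroup.closure_induction
      (p := fun x _ => ∃ a b : ℕ, (a ∈ D ∨ a = 0) ∧ (b ∈ D ∨ b = 0) ∧ x = (a : ℤ) - b)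
      ?_ ?_ ?_ ?_ hgmem
    · rintro x ⟨s, hs, rfl⟩
      exact ⟨s, 0, Or.inl hs, Or.inr rfl, by simp⟩
    · exact ⟨0, 0, Or.inr rfl, Or.inr rfl, by simp⟩
    · rintro x y _ _ ⟨a, b, ha, hb, rfl⟩ ⟨a', b', ha', hb', rfl⟩
      refine ⟨a + a', b + b', ?_, ?_, by push_cast; ring⟩
      · rcases ha with ha | rfl
        · rcases ha' with ha' | rfl
          · exact Or.inl (hadd _ ha _ ha')
          · simpa using Or.inl ha
        · simpa using ha'
      · rcases hb with hb | rfl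
        · rcases hb' with hb' | rfl
          · exact Or.inl (hadd _ hb _ hb')
          · simpa using Or.inl hb
        · simpa using hb'
    · rintro x _ ⟨a, b, ha, hb, rfl⟩
      exact ⟨b, a, hb, ha, by ring⟩
  set d : ℕ := g.natAbs with hd
  have hdpos : 0 < d := Int.natAbs_pos.2 hgne
  have hdvd' : ∀ s ∈ D, d ∣ s := by
    intro s hs
    have h1 : (d : ℤ) ∣ (s : ℤ) := Int.natAbs_dvd.2 (hdvd s hs)
    exact_mod_cast h1
  -- get a b ∈ D∪{0} with a = b + d
  obtain ⟨a, b, ha, hb, hab⟩ := hdiff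
  have hcase : ((a : ℤ) - b = d) ∨ ((b : ℤ) - a = d) := by
    rcases Int.natAbs_eq g with h | h
    · left; rw [← hab, ← h]
    · right; rw [hd] at *; omega
  -- wlog: get a' b' with a' = b' + d
  obtain ⟨a', b', ha', hb', hab'⟩ :
      ∃ a' b' : ℕ, (a' ∈ D ∨ a' = 0) ∧ (b' ∈ D ∨ b' = 0) ∧ a' = b' + d := by
    rcases hcase with h | h
    · exact ⟨a, b, ha, hb, by omega⟩
    · exact ⟨b, a, hb, ha, by omega⟩
  have haD : a' ∈ D := by
    rcases ha' with h | rfl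
    · exact h
    · omega
  rcases hb' with hbD | rfl
  · -- b' ≥ 1 case
    have hb1 : 1 ≤ b' := hpos b' hbD
    refine ⟨d, a' * b' + 1, hdpos, hdvd', ?_⟩
    intro m hm hdm
    obtain ⟨k, rfl⟩ := hdm
    set x := k % b' with hx
    set j := k / b' with hj
    have hk : k = b' * j + x := by rw [hx, hj]; exact (Nat.div_add_mod k b').symm
    have hxa : x < b' := Nat.mod_lt _ (by omega)
    have hjd : x ≤ j * d := by
      by_contra hcon
      push_neg at hcon
      have : d * k ≤ a' * b' := by
        calc d * k = b' * (j * d) + x * d := by rw [hk]; ring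
          _ ≤ b' * (x - 1) + x * d := by
              have : j * d ≤ x - 1 := by omega
              exact Nat.add_le_add_right (Nat.mul_le_mul_left _ this) _
          _ ≤ b' * (b' - 2) + (b' - 1) * d := by
              have h1 : x - 1 ≤ b' - 2 := by omega
              have h2 : x ≤ b' - 1 := by omega
              exact Nat.add_le_add (Nat.mul_le_mul_left _ h1) (Nat.mul_le_mul_right _ h2)
          _ ≤ a' * b' := by
              rw [hab']
              rcases Nat.eq_zero_or_pos b' with h | h
              · omega
              · nlinarith
      omega
    set y := j * d - x with hy
    have hmeq : d * k = x * a' + y * b' := by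
      have : y + x = j * d := by omega
      calc d * k = b' * (j * d) + x * d := by rw [hk]; ring
        _ = b' * (y + x) + x * d := by rw [this]
        _ = x * (b' + d) + y * b' := by ring
        _ = x * a' + y * b' := by rw [hab']
    rw [hmeq]
    rcases Nat.eq_zero_or_pos x with hx0 | hx1
    · have hxa0 : x * a' = 0 := by rw [hx0]; ring
      have hy1 : 1 ≤ y := by
        rcases Nat.eq_zero_or_pos y with h | h
        · have hyb0 : y * b' = 0 := by rw [h]; ring
          omega
        · exact h
      rw [hxa0, Nat.zero_add]
      exact nsg_mul_mem D hadd hbD y hy1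
    · rcases Nat.eq_zero_or_pos y with hy0 | hy1
      · have hyb0 : y * b' = 0 := by rw [hy0]; ring
        rw [hyb0, Nat.add_zero]
        exact nsg_mul_mem D hadd haD x hx1
      · exact hadd _ (nsg_mul_mem D hadd haD x hx1) _ (nsg_mul_mem D hadd hbD y hy1)
  · -- b' = 0 : a' = d ∈ D
    refine ⟨d, 1, hdpos, hdvd', ?_⟩
    intro m hm hdm
    obtain ⟨k, rfl⟩ := hdm
    have hk1 : 1 ≤ k := by
      rcases Nat.eq_zero_or_pos k with rfl | h
      · omega
      · exact h
    have := nsg_mul_mem D hadd haD k hk1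
    rwa [show k * a' = d * k by rw [show a' = d by omega]; ring] at this


/-- Cyclicity theorem (Cohen–Dubois–Quadrat–Viot): the max-times powers of an irreducible
matrix with maximum cycle geometric mean 1 are ultimately periodic. -/
theorem cyclicity_theorem {n : ℕ} (A : Matrix (Fin n) (Fin n) ℝ≥0)
    (hirr : IrreducibleMat A)
    (hcyc : ∀ (m : ℕ) (c : Fin (m+1) → Fin n), cycleWeight A c ≤ 1)
    (hone : ∃ (m : ℕ) (c : Fin (m+1) → Fin n), cycleWeight A c = 1) :
    ∃ (T γ : ℕ), 1 ≤ γ ∧ ∀ t, T ≤ t → maxPow A (t + γ) = maxPow A t := by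
  classical
  open CycAux in
  rcases Nat.eq_zero_or_pos n with hn0 | hn
  · subst hn0
    exact ⟨0, 1, le_refl 1, fun t _ => by funext i j; exact i.elim0⟩
  -- critical vertex and cycle
  obtain ⟨m₀, c₀, hc₀⟩ := hone
  set v : Fin n := c₀ 0 with hv
  have hpw : CycAux.pw A (m₀+1) (fun s => c₀ ⟨s % (m₀+1), Nat.mod_lt _ (Nat.succ_pos m₀)⟩) = 1 := by
    rw [← CycAux.cycleWeight_eq_pw]; exact hc₀
  set f₀ : ℕ → Fin n := fun s => c₀ ⟨s % (m₀+1), Nat.mod_lt _ (Nat.succ_pos m₀)⟩ with hf₀def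
  have hf₀0 : f₀ 0 = v := congrArg c₀ (Fin.ext (by simp))
  have hf₀ℓ : f₀ (m₀+1) = v := congrArg c₀ (Fin.ext (by simp [Nat.mod_self]))
  have hvv : 1 ≤ maxPow A (m₀+1) v v := by
    have h := CycAux.pw_le_entry A (m₀+1) f₀
    rwa [hf₀0, hf₀ℓ, hpw] at h
  have hvvk : ∀ k : ℕ, 1 ≤ maxPow A (k * (m₀+1)) v v := by
    intro k
    induction k with
    | zero => simp [maxPow]
    | succ k ih =>
        have h := CycAux.entry_mul_le A (k*(m₀+1)) (m₀+1) v v v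
        have h2 : 1 * 1 ≤ maxPow A (k*(m₀+1) + (m₀+1)) v v := le_trans (mul_le_mul' ih hvv) h
        rwa [show k*(m₀+1) + (m₀+1) = (k+1)*(m₀+1) by ring, one_mul] at h2
  -- the semigroup of positive return times at v
  set Dset : Set ℕ := {s | 0 < s ∧ 0 < maxPow A s v v} with hDset
  have hadd : ∀ a ∈ Dset, ∀ b ∈ Dset, a + b ∈ Dset := by
    rintro a ⟨ha1, ha2⟩ b ⟨hb1, hb2⟩
    refine ⟨by omega, lt_of_lt_of_le (mul_pos ha2 hb2) (CycAux.entry_mul_le A a b v v v)⟩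
  have hx₀ : (m₀+1) ∈ Dset := ⟨Nat.succ_pos _, lt_of_lt_of_le one_pos hvv⟩
  obtain ⟨d, M, hd, hdvdD, hM⟩ := nsg Dset hadd (fun a ha => ha.1) (m₀+1) hx₀
  have hdℓ : d ∣ (m₀+1) := hdvdD _ hx₀
  have hdle : d ≤ m₀+1 := Nat.le_of_dvd (Nat.succ_pos _) hdℓ
  -- window of guaranteed-positive return times
  set W : Finset ℕ := (Finset.Icc M (M + (m₀+1))).filter (fun s => d ∣ s) with hW
  have hWne : W.Nonempty := by
    have hmod := Nat.div_add_mod M d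
    have hmlt : M % d < d := Nat.mod_lt _ hd
    rcases Nat.eq_zero_or_pos (M % d) with h0 | h1
    · exact ⟨M, Finset.mem_filter.2 ⟨Finset.mem_Icc.2 ⟨le_refl _, by omega⟩, ⟨M / d, by omega⟩⟩⟩
    · refine ⟨M + d - M % d, Finset.mem_filter.2 ⟨Finset.mem_Icc.2 ⟨by omega, by omega⟩,
        ⟨M / d + 1, by have hh : d * (M / d + 1) = d * (M / d) + d := by ring
                       omega⟩⟩⟩
  set δ₀ : ℝ≥0 := W.inf' hWne (fun s => maxPow A s v v) with hδ₀def
  have hδ₀ : 0 < δ₀ := by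
    rw [hδ₀def]
    rw [Finset.lt_inf'_iff]
    intro s hs
    obtain ⟨hs1, hs2⟩ := Finset.mem_filter.1 hs
    exact (hM s (Finset.mem_Icc.1 hs1).1 hs2).2
  -- padding lemma
  have pad : ∀ m, M ≤ m → d ∣ m → δ₀ ≤ maxPow A m v v := by
    intro m hm hdm
    obtain ⟨q, e, hqe, helt⟩ : ∃ q e, m - M = q * (m₀+1) + e ∧ e < m₀+1 :=
      ⟨(m-M)/(m₀+1), (m-M)%(m₀+1), by rw [Nat.mul_comm]; exact (Nat.div_add_mod _ _).symm,
        Nat.mod_lt _ (Nat.succ_pos _)⟩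
    set m' := m - q * (m₀+1) with hm'def
    have hm'1 : M ≤ m' := by omega
    have hm'2 : m' ≤ M + (m₀+1) := by omega
    have hdm' : d ∣ m' := Nat.dvd_sub hdm (hdℓ.mul_left q)
    have hmem : m' ∈ W := Finset.mem_filter.2 ⟨Finset.mem_Icc.2 ⟨hm'1, hm'2⟩, hdm'⟩
    have h1 : δ₀ ≤ maxPow A m' v v := Finset.inf'_le _ hmem
    calc δ₀ = δ₀ * 1 := (mul_one _).symm
      _ ≤ maxPow A m' v v * maxPow A (q * (m₀+1)) v v := mul_le_mul' h1 (hvvk q)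
      _ ≤ maxPow A (m' + q * (m₀+1)) v v := CycAux.entry_mul_le A _ _ _ _ _
      _ = maxPow A m v v := by rw [show m' + q*(m₀+1) = m by omega]
  -- access walks to and from v
  choose α hα1 hα2 using fun i => hirr i v
  choose β hβ1 hβ2 using fun j => hirr v j
  choose α' hα'1 hα'2 using fun i => hirr v i
  choose β' hβ'1 hβ'2 using fun j => hirr j v
  set Aα := Finset.univ.sup α with hAα
  set Bβ := Finset.univ.sup β with hBβ
  set T₁ := M + Aα + Bβ with hT₁
  -- uniform lower bound for positive entries of large powers
  have low : ∀ t (i j : Fin n), T₁ ≤ t → 0 < maxPow A t i j →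
      maxPow A (α i) i v * (δ₀ * maxPow A (β j) v j) ≤ maxPow A t i j := by
    intro t i j ht hpos
    have hαs : α i ≤ Aα := Finset.le_sup (Finset.mem_univ i)
    have hβs : β j ≤ Bβ := Finset.le_sup (Finset.mem_univ j)
    -- divisibility of t - α i - β j by d
    have h1 : 0 < maxPow A (t + β' j) i v :=
      lt_of_lt_of_le (mul_pos hpos (hβ'2 j)) (CycAux.entry_mul_le A t (β' j) i j v)
    have hD1 : (α' i + (t + β' j)) ∈ Dset :=
      ⟨by have := hα'1 i; omega, lt_of_lt_of_le (mul_pos (hα'2 i) h1) (CycAux.entry_mul_le A (α' i) (t + β' j) v i v)⟩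
    have hD2 : (α' i + α i) ∈ Dset :=
      ⟨by have := hα1 i; omega,
       lt_of_lt_of_le (mul_pos (hα'2 i) (hα2 i)) (CycAux.entry_mul_le A (α' i) (α i) v i v)⟩
    have hD3 : (β j + β' j) ∈ Dset :=
      ⟨by have := hβ1 j; omega,
       lt_of_lt_of_le (mul_pos (hβ2 j) (hβ'2 j)) (CycAux.entry_mul_le A (β j) (β' j) v j v)⟩
    have hd1 := hdvdD _ hD1
    have hd2 := hdvdD _ hD2
    have hd3 := hdvdD _ hD3
    have hdm : d ∣ (t - α i - β j) := by
      have he : (t - α i - β j) = (α' i + (t + β' j)) - ((α' i + α i) + (β j + β' j)) := by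
        omega
      rw [he]
      exact Nat.dvd_sub hd1 (Nat.dvd_add hd2 hd3)
    have hm : M ≤ t - α i - β j := by omega
    have hpad := pad _ hm hdm
    have hsum : α i + ((t - α i - β j) + β j) = t := by omega
    have c1 : maxPow A (α i) i v * maxPow A ((t - α i - β j) + β j) v j ≤ maxPow A t i j := by
      have h := CycAux.entry_mul_le A (α i) ((t - α i - β j) + β j) i v j
      rwa [hsum] at h
    have c2 : maxPow A (t - α i - β j) v v * maxPow A (β j) v j
        ≤ maxPow A ((t - α i - β j) + β j) v j := CycAux.entry_mul_le A _ _ _ _ _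
    calc maxPow A (α i) i v * (δ₀ * maxPow A (β j) v j)
        ≤ maxPow A (α i) i v * (maxPow A (t - α i - β j) v v * maxPow A (β j) v j) :=
          mul_le_mul_right (mul_le_mul_left hpad _) _
      _ ≤ maxPow A (α i) i v * maxPow A ((t - α i - β j) + β j) v j := mul_le_mul_right c2 _
      _ ≤ maxPow A t i j := c1
  -- global positive lower bound
  have hne : (Finset.univ : Finset (Fin n × Fin n)).Nonempty :=
    ⟨(⟨0, hn⟩, ⟨0, hn⟩), Finset.mem_univ _⟩
  set δ : ℝ≥0 := Finset.inf' Finset.univ hne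
    (fun p : Fin n × Fin n => maxPow A (α p.1) p.1 v * (δ₀ * maxPow A (β p.2) v p.2)) with hδdef
  have hδpos : 0 < δ := by
    rw [hδdef, Finset.lt_inf'_iff]
    intro p _
    exact mul_pos (hα2 p.1) (mul_pos hδ₀ (hβ2 p.2))
  -- budget on the number of subcritical cycles
  obtain ⟨K, hK⟩ : ∃ K : ℕ, CycAux.Bb A * CycAux.csub A ^ K < δ := by
    rcases eq_or_ne (CycAux.Bb A) 0 with h0 | h0
    · exact ⟨0, by rw [h0, zero_mul]; exact hδpos⟩
    · have hb : 0 < CycAux.Bb A := pos_iff_ne_zero.2 h0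
      obtain ⟨K, hK⟩ := exists_pow_lt_of_lt_one (div_pos hδpos hb) (CycAux.csub_lt_one A)
      refine ⟨K, ?_⟩
      calc CycAux.Bb A * CycAux.csub A ^ K < CycAux.Bb A * (δ / CycAux.Bb A) :=
            mul_lt_mul_of_pos_left hK hb
        _ = δ := by rw [mul_comm, div_mul_cancel₀ δ h0]
  have hcl : ∀ (m : ℕ) (f : ℕ → Fin n), f (m+1) = f 0 → CycAux.pw A (m+1) f ≤ 1 := by
    intro m f hf
    rw [CycAux.pw_closed_eq_cycleWeight A m f hf]
    exact hcyc m _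
  set N₀ := max T₁ (n - 1 + K * n) with hN₀
  set FF : Finset ℝ≥0 := insert 0 (CycAux.S A N₀) with hFF
  -- every entry of every power lies in FF
  have key : ∀ t (i j : Fin n), maxPow A t i j ∈ FF := by
    intro t i j
    rcases eq_or_ne (maxPow A t i j) 0 with hz | hz
    · rw [hz]; exact Finset.mem_insert_self _ _
    have hpos : 0 < maxPow A t i j := pos_iff_ne_zero.2 hz
    obtain ⟨f, hf0, hft, hfw⟩ := CycAux.entry_eq_pw A hpos
    rcases le_or_gt t T₁ with hsmall | hbig
    · refine Finset.mem_insert_of_mem ?_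
      rw [← hfw]
      exact CycAux.S_mono A (le_trans hsmall (le_max_left _ _)) (CycAux.pw_mem_S A t f)
    · obtain ⟨r, hr1, hr2⟩ := CycAux.dec A hn hcl t f
      have hδt : δ ≤ maxPow A t i j :=
        le_trans (Finset.inf'_le _ (Finset.mem_univ (i, j))) (low t i j hbig.le hpos)
      have hrK : r ≤ K := by
        by_contra hcon
        push_neg at hcon
        have hpow : CycAux.csub A ^ r ≤ CycAux.csub A ^ K :=
          pow_le_pow_of_le_one zero_le' (CycAux.csub_lt_one A).le hcon.le
        have h2 : CycAux.Bb A * CycAux.csub A ^ r < δ :=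
          lt_of_le_of_lt (mul_le_mul_right hpow _) hK
        have h3 : δ ≤ CycAux.pw A t f := by rw [hfw]; exact hδt
        exact absurd (lt_of_le_of_lt (le_trans h3 hr1) h2) (lt_irrefl _)
      have hle : n - 1 + r * n ≤ N₀ :=
        le_trans (Nat.add_le_add_left (Nat.mul_le_mul_right _ hrK) _) (le_max_right _ _)
      refine Finset.mem_insert_of_mem ?_
      rw [← hfw]
      exact CycAux.S_mono A hle hr2
  -- pigeonhole on the finitely many possible powers
  set Ψ : ℕ → (Fin n → Fin n → {x : ℝ≥0 // x ∈ FF}) :=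
    fun t i j => ⟨maxPow A t i j, key t i j⟩ with hΨ
  obtain ⟨t1, t2, htne, hteq⟩ := Finite.exists_ne_map_eq_of_infinite Ψ
  have hmat : maxPow A t1 = maxPow A t2 := by
    funext i j
    exact congrArg Subtype.val (congrFun (congrFun hteq i) j)
  obtain ⟨u1, u2, hlt, hequ⟩ : ∃ u1 u2, u1 < u2 ∧ maxPow A u1 = maxPow A u2 := by
    rcases htne.lt_or_gt with h | h
    · exact ⟨t1, t2, h, hmat⟩
    · exact ⟨t2, t1, h, hmat.symm⟩
  refine ⟨u1, u2 - u1, by omega, ?_⟩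
  intro t ht
  have e1 : t + (u2 - u1) = u2 + (t - u1) := by omega
  have e2 : u1 + (t - u1) = t := by omega
  rw [e1, CycAux.maxPow_add, ← hequ, ← CycAux.maxPow_add, e2]
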